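/- arXiv:2510.03227 — 3 statements merged into one kernel-verified Lean document; each statement's English description precedes it below -/
import Mathlib

section
/- Let N ≥ 1, let θ₁,…,θ_N ∈ ℝ, and let t₁,…,t_{N−1} ∈ {0,1}. On the N-qubit space (ℂ²)^{⊗N}, apply for each j ∈ {1,…,N−1} the gate CNOT_{N,j} (control qubit N, target qubit j) to the product state ⊗_{j=1}^{N} |+_{θ_j}⟩, and then project each qubit j ∈ {1,…,N−1} onto the computational basis state |t_j⟩. The resulting (unnormalized) vector on qubit N equals 2^{−(N−1)/2} · e^{i Σ_{j<N} t_j θ_j} · |+_{θ'}⟩, where θ' = θ_N + Σ_{j=1}^{N−1} (−1)^{t_j} θ_j. -/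
/-!
All the CNOTs share their control, so together they add the control bit `b` to every target
bit: the amplitude of the output at `(t, b)` is the amplitude of `⊗ |+_{θ_j}⟩` at `(t + b, b)`,
namely `2^{-(n+1)/2} e^{i (Σ_j (t_j ⊕ b) θ_j + b θ_N)}`. Since `t ⊕ b = t + (-1)^t b` for bits,
the phase splits as `Σ_j t_j θ_j + b θ'`.
-/

open Complex

/-- The rotated plus state `|+_θ⟩ = (1/√2)(|0⟩ + e^{iθ}|1⟩)`. -/
noncomputable def ketPlus (θ : ℝ) : Fin 2 → ℂ :=
  ![(Real.sqrt 2)⁻¹, Complex.exp (θ * Complex.I) * (Real.sqrt 2)⁻¹]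

/-- The CNOT gate with control qubit `c` and target qubit `t` (for `c ≠ t`), acting on an
`n`-qubit state vector: it maps the basis vector indexed by the bit string `x` to the one
indexed by `x` with bit `t` replaced by `x_t ⊕ x_c`.  Since the gate is a self-inverse
permutation of the basis, its action on coordinate functions is precomposition with that
permutation. -/
def cnotGate {n : ℕ} (c t : Fin n) (ψ : (Fin n → Fin 2) → ℂ) : (Fin n → Fin 2) → ℂ :=
  fun x => ψ (Function.update x t (x t + x c))

lemma ketPlus_apply (θ : ℝ) (v : Fin 2) :
    ketPlus θ v = (Real.sqrt 2 : ℂ)⁻¹ * exp ((((v : ℕ) : ℝ) * θ : ℝ) * I) := by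
  fin_cases v <;> simp [ketPlus, mul_comm]

lemma prod_ketPlus {ι : Type*} [Fintype ι] (θ : ι → ℝ) (x : ι → Fin 2) :
    ∏ j, ketPlus (θ j) (x j) =
      (Real.sqrt 2 : ℂ)⁻¹ ^ Fintype.card ι * exp ((∑ j, ((x j : ℕ) : ℝ) * θ j : ℝ) * I) := by
  simp only [ketPlus_apply, Finset.prod_mul_distrib, Finset.prod_const, ← exp_sum,
    ← Finset.sum_mul, ofReal_sum, Finset.card_univ]

lemma Fin.val_add_two_cast (v b : Fin 2) :
    (((v + b : Fin 2) : ℕ) : ℝ) = (v : ℕ) + (-1) ^ (v : ℕ) * (b : ℕ) := by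
  fin_cases v <;> fin_cases b <;> norm_num [show (1 + 1 : Fin 2) = 0 from rfl]

lemma foldl_cnotGate_apply {m : ℕ} (c : Fin m) (l : List (Fin m)) (hl : l.Nodup) (hc : c ∉ l)
    (ψ : (Fin m → Fin 2) → ℂ) (x : Fin m → Fin 2) :
    l.foldl (fun ψ t => cnotGate c t ψ) ψ x = ψ (fun i => if i ∈ l then x i + x c else x i) := by
  induction l generalizing ψ with
  | nil => simp
  | cons j l ih =>
    obtain ⟨hjl, hl⟩ := List.nodup_cons.mp hl
    have hcl : c ∉ l := fun h => hc (List.mem_cons_of_mem _ h)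
    rw [List.foldl_cons, ih hl hcl]
    simp only [cnotGate, if_neg hjl, if_neg hcl]
    congr 1
    funext i
    rcases eq_or_ne i j with rfl | hij
    · simp
    · simp [hij]

lemma sum_val_snoc_add_mul {n : ℕ} (t : Fin n → Fin 2) (b : Fin 2) (θ : Fin (n + 1) → ℝ) :
    ∑ j, ((((Fin.snoc (fun j => t j + b) b : Fin (n + 1) → Fin 2) j) : ℕ) : ℝ) * θ j =
      ∑ j : Fin n, ((t j : ℕ) : ℝ) * θ j.castSucc +
        ((b : ℕ) : ℝ) * (θ (Fin.last n) + ∑ j : Fin n, (-1) ^ (t j : ℕ) * θ j.castSucc) := by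
  simp only [Fin.sum_univ_castSucc, Fin.snoc_castSucc, Fin.snoc_last, Fin.val_add_two_cast,
    add_mul, Finset.sum_add_distrib, mul_add, Finset.mul_sum]
  ring_nf

/-- applying `CNOT_{N,j}` (control the last qubit, target `j`) for each
`j ∈ {1,…,N−1}` to `⊗_j |+_{θ_j}⟩`, then projecting qubit `j` onto `|t_j⟩` for every
`j < N`, leaves on the last qubit the vector
`2^{−(N−1)/2} · e^{i Σ_{j<N} t_j θ_j} · |+_{θ'}⟩` with
`θ' = θ_N + Σ_{j<N} (−1)^{t_j} θ_j`.  (Here `N = n + 1 ≥ 1`, the qubits are indexed by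
`Fin (n+1)`, the control is `Fin.last n`, and the targets are the `j.castSucc` for
`j : Fin n`.) -/
theorem plugged_rsp_correctness (n : ℕ) (θ : Fin (n + 1) → ℝ) (t : Fin n → Fin 2) :
    let ctrl : Fin (n + 1) := Fin.last n
    let ψ₀ : (Fin (n + 1) → Fin 2) → ℂ := fun x => ∏ j, ketPlus (θ j) (x j)
    let ψfinal : (Fin (n + 1) → Fin 2) → ℂ :=
      (List.finRange n).foldl (fun ψ j => cnotGate ctrl j.castSucc ψ) ψ₀
    let θ' : ℝ := θ ctrl + ∑ j : Fin n, (-1 : ℝ) ^ ((t j : ℕ)) * θ j.castSucc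
    ∀ b : Fin 2,
      ψfinal (Fin.snoc t b) =
        (((Real.sqrt 2)⁻¹ : ℂ) ^ n *
            Complex.exp ((∑ j : Fin n, ((t j : ℕ) : ℝ) * θ j.castSucc) * Complex.I)) *
          ketPlus θ' b := by
  intro ctrl ψ₀ ψfinal θ' b
  set x : Fin (n + 1) → Fin 2 := Fin.snoc t b
  have targets_nodup : ((List.finRange n).map Fin.castSucc).Nodup :=
    (List.nodup_finRange n).map (Fin.castSucc_injective n)
  have ctrl_not_target : ctrl ∉ (List.finRange n).map Fin.castSucc := by simp [ctrl]
  have flipped : (fun i => if i ∈ (List.finRange n).map Fin.castSucc then x i + x ctrl else x i) =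
      Fin.snoc (fun j => t j + b) b := by
    funext i
    induction i using Fin.lastCases <;> simp [x, ctrl]
  have hψ : ψfinal x = ψ₀ (Fin.snoc (fun j => t j + b) b) := by
    rw [← flipped, ← foldl_cnotGate_apply ctrl _ targets_nodup ctrl_not_target ψ₀ x,
      List.foldl_map]
  simp only [hψ, ψ₀, θ']
  rw [prod_ketPlus, sum_val_snoc_add_mul, ketPlus_apply]
  simp only [Fintype.card_fin, pow_succ, ofReal_add, ofReal_mul, add_mul, exp_add]
  ring
end

section
/- Identify the angle set Θ = {kπ/4 : k = 0,…,7} with the additive group ZMod 8, and for a bit b ∈ {0,1} write σ(b)·x for x if b = 0 and −x if b = 1. Fix any θ ∈ ZMod 8 and any t ∈ {0,1}. Define F, G : (ZMod 8) × {0,1} → (ZMod 8) × {0,1} × (ZMod 8) by F(x, b) = (x, b, σ(b)θ − σ(t)x) and G(x, b) = (σ(b)θ + x, b ⊕ t, −σ(t)x). Then the pushforward of the uniform probability distribution on (ZMod 8) × {0,1} under F equals its pushforward under G. -/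
/-!
The real transcript map factors through the ideal one, `F = G ∘ φ`, for the bijection
`φ (x, b) = (x - σ(b ⊕ t) θ, b ⊕ t)` of the coin space; this only needs `σ` to be an action of
`Fin 2` by additive automorphisms. The uniform distribution is invariant under bijections, so
the two pushforwards agree.
-/

/-- Sign action of a bit: `sg b x = x` if `b = 0` and `−x` if `b = 1`. -/
def sg (b : Fin 2) (x : ZMod 8) : ZMod 8 := if b = 0 then x else -x

theorem PMF.map_uniformOfFintype_equiv {α : Type*} [Fintype α] [Nonempty α] (e : α ≃ α) :
    (PMF.uniformOfFintype α).map e = PMF.uniformOfFintype α := by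
  classical
  ext a
  rw [PMF.map_apply, tsum_fintype]
  simpa using e.sum_comp (fun y => if a = y then (Fintype.card α : ENNReal)⁻¹ else 0)

theorem fin_two_add_add_cancel (b t : Fin 2) : b + t + t = b := by
  revert b t
  decide

theorem sg_sub (b : Fin 2) (x y : ZMod 8) : sg b (x - y) = sg b x - sg b y := by
  unfold sg
  split_ifs <;> ring

theorem sg_sg (a b : Fin 2) (x : ZMod 8) : sg a (sg b x) = sg (a + b) x := by
  fin_cases a <;> fin_cases b <;> simp [sg]

/-- Solving `G (x', b') = F (x, b)` forces `b' = b ⊕ t` and `x' = x - σ(b') θ`. -/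
def realToIdealCoins (θ : ZMod 8) (t : Fin 2) : ZMod 8 × Fin 2 ≃ ZMod 8 × Fin 2 where
  toFun p := (p.1 - sg (p.2 + t) θ, p.2 + t)
  invFun q := (q.1 + sg q.2 θ, q.2 + t)
  left_inv p := by simp [fin_two_add_add_cancel]
  right_inv q := by simp [fin_two_add_add_cancel]

/-- for any fixed `θ : ZMod 8` and `t : Fin 2`, the pushforward of the
uniform distribution on `(ZMod 8) × {0,1}` under
`F(x,b) = (x, b, σ(b)θ − σ(t)x)` equals its pushforward under
`G(x,b) = (σ(b)θ + x, b ⊕ t, −σ(t)x)`. -/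
theorem real_ideal_transcripts_identically_distributed (θ : ZMod 8) (t : Fin 2) :
    (PMF.uniformOfFintype (ZMod 8 × Fin 2)).map
        (fun p => (p.1, p.2, sg p.2 θ - sg t p.1)) =
      (PMF.uniformOfFintype (ZMod 8 × Fin 2)).map
        (fun p => (sg p.2 θ + p.1, p.2 + t, -(sg t p.1))) := by
  have real_eq_ideal_comp :
      (fun p : ZMod 8 × Fin 2 => (p.1, p.2, sg p.2 θ - sg t p.1)) =
        (fun p => (sg p.2 θ + p.1, p.2 + t, -(sg t p.1))) ∘ realToIdealCoins θ t := by
    funext ⟨x, b⟩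
    have hσ : sg t (sg (b + t) θ) = sg b θ := by
      rw [sg_sg, add_comm, fin_two_add_add_cancel]
    simp only [Function.comp_apply, realToIdealCoins, Equiv.coe_fn_mk, fin_two_add_add_cancel,
      sg_sub, hσ, add_sub_cancel, neg_sub]
  rw [real_eq_ideal_comp, ← PMF.map_comp, PMF.map_uniformOfFintype_equiv]
end

section
/- Let 0 < p_noise < 1, 0 < p_leak < 1, 0 < c < 1, and let κ ∈ ℕ satisfy (1 − p_noise)^κ > c. Then (i) κ < log(c) / log(1 − p_noise), and (ii) p_leak^κ > c^{log(p_leak)/log(1 − p_noise)} (logarithms natural). -/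
/-! Write `q = 1 - p_noise`. Since `0 < q < 1`, the hypothesis `c < q ^ κ` is equivalent to
`κ < log_q c`, which is (i). Both `c ^ (log p_leak / log q)` and `p_leak ^ (log c / log q)` equal
`exp (log c · log p_leak / log q)`, so (ii) says `p_leak ^ log_q c < p_leak ^ κ`, which follows from (i)
because `t ↦ p_leak ^ t` is strictly decreasing. -/

open Real

theorem Real.rpow_log_div_comm {x y : ℝ} (hx : 0 < x) (hy : 0 < y) (b : ℝ) :
    x ^ (log y / b) = y ^ (log x / b) := by
  rw [rpow_def_of_pos hx, rpow_def_of_pos hy]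
  ring_nf

theorem correctness_security_tradeoff_general
    (pnoise pleak c : ℝ)
    (h1 : 0 < pnoise) (h2 : pnoise < 1)
    (h3 : 0 < pleak) (h4 : pleak < 1)
    (h5 : 0 < c)
    (κ : ℕ) (hκ : (1 - pnoise) ^ κ > c) :
    (κ : ℝ) < Real.log c / Real.log (1 - pnoise) ∧
      pleak ^ κ > c ^ (Real.log pleak / Real.log (1 - pnoise)) := by
  have hκ_lt : (κ : ℝ) < Real.log c / Real.log (1 - pnoise) := by
    rw [log_div_log, lt_logb_iff_rpow_lt_of_base_lt_one (by linarith) (by linarith) h5, rpow_natCast]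
    exact hκ
  refine ⟨hκ_lt, ?_⟩
  rw [rpow_log_div_comm h5 h3, ← rpow_natCast]
  exact rpow_lt_rpow_of_exponent_gt h3 h4 hκ_lt

/-- correctness-versus-security trade-off: if `0 < p_noise < 1`,
`0 < p_leak < 1`, `0 < c < 1` and `(1 − p_noise)^κ > c`, then
(i) `κ < log(c)/log(1 − p_noise)` and
(ii) `p_leak^κ > c^(log(p_leak)/log(1 − p_noise))`. -/
theorem correctness_security_tradeoff
    (pnoise pleak c : ℝ)
    (h1 : 0 < pnoise) (h2 : pnoise < 1)
    (h3 : 0 < pleak) (h4 : pleak < 1)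
    (h5 : 0 < c) (h6 : c < 1)
    (κ : ℕ) (hκ : (1 - pnoise) ^ κ > c) :
    (κ : ℝ) < Real.log c / Real.log (1 - pnoise) ∧
      pleak ^ κ > c ^ (Real.log pleak / Real.log (1 - pnoise)) :=
  correctness_security_tradeoff_general pnoise pleak c h1 h2 h3 h4 h5 κ hκ
end
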